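/- arXiv:2501.11775 — 3 statements merged into one kernel-verified Lean document; each statement's English description precedes it below -/
import Mathlib

section
/- Let q be a prime power, n ≥ 2, and let W = {ω_0, …, ω_{n-1}} be a basis of F_{q^n} over F_q. The map ψ_W from PG(n-1,q) to μ_{(q^n-1)/(q-1)} defined by ψ_W(x_0 : … : x_{n-1}) = (∑_j x_j ω_j)^{q-1} is well-defined (independent of the choice of representative) and bijective. -/
/-!
Identify `PG(n-1, q)` with `ℙ_K(L)` through the basis. On `Lˣ` the map `s ↦ s ^ (q - 1)` has
kernel `Kˣ`, because the Frobenius `s ↦ s ^ q` generates `Gal(L/K)` and so fixes exactly `K`;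
hence it is injective on `ℙ_K(L)`. Since `Lˣ` is cyclic of order `(q - 1) m` with
`m = (q ^ n - 1) / (q - 1)`, its `(q - 1)`-th powers are exactly its `m`-torsion.
-/

theorem IsCyclic.powMonoidHom_range_eq_ker {G : Type*} [CommGroup G] [IsCyclic G] [Finite G]
    {d m : ℕ} (hdm : d * m = Nat.card G) :
    (powMonoidHom d : G →* G).range = (powMonoidHom m : G →* G).ker := by
  have hd : 0 < d := Nat.pos_of_mul_pos_right (hdm ▸ Nat.card_pos)
  refine Subgroup.eq_of_le_of_card_ge ?_ ?_
  · rintro _ ⟨x, rfl⟩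
    simp only [MonoidHom.mem_ker, powMonoidHom_apply, ← pow_mul, hdm, pow_card_eq_one']
  · rw [IsCyclic.card_powMonoidHom_range, IsCyclic.card_powMonoidHom_ker, ← hdm,
      Nat.gcd_mul_left_left, Nat.gcd_mul_right_left, Nat.mul_div_cancel_left _ hd]

theorem Projectivization.map_linearEquiv_surjective {K V W : Type*} [DivisionRing K]
    [AddCommGroup V] [Module K V] [AddCommGroup W] [Module K W] (e : V ≃ₗ[K] W) :
    Function.Surjective (Projectivization.map (e : V →ₗ[K] W) e.injective) := by
  intro p
  induction p using Projectivization.ind with | h w hw =>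
  exact ⟨mk K (e.symm w) (by simpa using hw), by simp [map_mk]⟩

namespace FiniteField

variable {K L : Type*} [Field K] [Fintype K] [Field L] [Algebra K L]

theorem pow_card_sub_one_smul {c : K} (hc : c ≠ 0) (s : L) :
    (c • s) ^ (Fintype.card K - 1) = s ^ (Fintype.card K - 1) := by
  rw [Algebra.smul_def, mul_pow, ← map_pow, pow_card_sub_one_eq_one c hc, map_one, one_mul]

variable (K L) in
noncomputable def projPowCardSubOne : Projectivization K L → L :=
  Projectivization.lift (fun s ↦ (s : L) ^ (Fintype.card K - 1)) fun s t c hst ↦ by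
    have hc : c ≠ 0 := by
      rintro rfl
      exact s.2 (by rw [hst, zero_smul])
    simp only [hst, pow_card_sub_one_smul hc]

@[simp]
theorem projPowCardSubOne_mk (s : L) (hs : s ≠ 0) :
    projPowCardSubOne K L (Projectivization.mk K s hs) = s ^ (Fintype.card K - 1) :=
  rfl

variable [Fintype L]

theorem mem_range_algebraMap_of_pow_card_eq_self {z : L} (hz : z ^ Fintype.card K = z) :
    z ∈ Set.range (algebraMap K L) := by
  rw [IsGalois.mem_range_algebraMap_iff_fixed]
  intro f
  obtain ⟨i, rfl⟩ := (bijective_frobeniusAlgEquivOfAlgebraic_pow K L).2 f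
  rw [AlgEquiv.coe_pow, coe_frobeniusAlgEquivOfAlgebraic]
  exact Function.iterate_fixed hz i

theorem exists_smul_eq_of_pow_card_sub_one_eq {s t : L} (ht : t ≠ 0)
    (h : s ^ (Fintype.card K - 1) = t ^ (Fintype.card K - 1)) : ∃ c : K, c • t = s := by
  have hfix : (s / t) ^ Fintype.card K = s / t := by
    rw [← Nat.sub_add_cancel Fintype.card_pos, pow_succ, div_pow, h,
      div_self (pow_ne_zero _ ht), one_mul]
  obtain ⟨c, hc⟩ := mem_range_algebraMap_of_pow_card_eq_self hfix
  exact ⟨c, by rw [Algebra.smul_def, hc, div_mul_cancel₀ _ ht]⟩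

variable (K L) in
theorem card_sub_one_dvd_card_sub_one : Fintype.card K - 1 ∣ Fintype.card L - 1 := by
  rw [Module.card_eq_pow_finrank (K := K) (V := L)]
  exact Nat.sub_one_dvd_pow_sub_one _ _

theorem exists_pow_card_sub_one_eq_iff {x : L} :
    (∃ s ≠ 0, s ^ (Fintype.card K - 1) = x) ↔
      x ≠ 0 ∧ x ^ ((Fintype.card L - 1) / (Fintype.card K - 1)) = 1 := by
  have hdm : (Fintype.card K - 1) * ((Fintype.card L - 1) / (Fintype.card K - 1)) =
      Nat.card Lˣ := by
    rw [Nat.card_units, ← Fintype.card_eq_nat_card,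
      Nat.mul_div_cancel' (card_sub_one_dvd_card_sub_one K L)]
  have key := SetLike.ext_iff.mp (IsCyclic.powMonoidHom_range_eq_ker hdm)
  constructor
  · rintro ⟨s, hs, rfl⟩
    have := (key (Units.mk0 s hs ^ (Fintype.card K - 1))).mp ⟨_, rfl⟩
    exact ⟨pow_ne_zero _ hs, by simpa [Units.ext_iff] using this⟩
  · rintro ⟨hx, hxm⟩
    obtain ⟨u, hu⟩ := (key (Units.mk0 x hx)).mpr (by simpa [Units.ext_iff] using hxm)
    exact ⟨u, u.ne_zero, by simpa [Units.ext_iff] using hu⟩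

theorem projPowCardSubOne_injective : Function.Injective (projPowCardSubOne K L) := by
  intro x y hxy
  induction x using Projectivization.ind with | h s hs =>
  induction y using Projectivization.ind with | h t ht =>
  rw [projPowCardSubOne_mk, projPowCardSubOne_mk] at hxy
  exact (Projectivization.mk_eq_mk_iff' K s t hs ht).mpr
    (exists_smul_eq_of_pow_card_sub_one_eq ht hxy)

theorem range_projPowCardSubOne :
    Set.range (projPowCardSubOne K L) =
      {x : L | x ≠ 0 ∧ x ^ ((Fintype.card L - 1) / (Fintype.card K - 1)) = 1} := by
  ext x
  rw [Set.mem_ofPred_eq, ← exists_pow_card_sub_one_eq_iff]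
  constructor
  · rintro ⟨p, rfl⟩
    induction p using Projectivization.ind with | h s hs => exact ⟨s, hs, rfl⟩
  · rintro ⟨s, hs, rfl⟩
    exact ⟨Projectivization.mk K s hs, rfl⟩

end FiniteField

open FiniteField in
theorem stmt2_general (K L : Type*) [Field K] [Fintype K] [Field L] [Fintype L] [Algebra K L]
    (n : ℕ)
    (ω : Fin n → L) (hω : ∃ b : Module.Basis (Fin n) K L, ∀ i, b i = ω i) :
    ∃ ψ : Projectivization K (Fin n → K) → L,
      (∀ (v : Fin n → K) (hv : v ≠ 0),
        ψ (Projectivization.mk K v hv) = (∑ j, v j • ω j) ^ (Fintype.card K - 1)) ∧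
      Function.Injective ψ ∧
      Set.range ψ =
        {x : L | x ≠ 0 ∧ x ^ ((Fintype.card K ^ n - 1) / (Fintype.card K - 1)) = 1} := by
  obtain ⟨b, hb⟩ := hω
  obtain rfl : ⇑b = ω := funext hb
  let e := b.equivFun.symm
  refine ⟨projPowCardSubOne K L ∘ Projectivization.map (e : (Fin n → K) →ₗ[K] L) e.injective,
    fun v hv ↦ ?_, ?_, ?_⟩
  · simp [Projectivization.map_mk, e, Module.Basis.equivFun_symm_apply]
  · exact projPowCardSubOne_injective.comp (Projectivization.map_injective _ _)
  · rw [(Projectivization.map_linearEquiv_surjective e).range_comp, range_projPowCardSubOne,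
      Module.card_fintype b, Fintype.card_fin]

theorem stmt2 (K L : Type*) [Field K] [Fintype K] [Field L] [Fintype L] [Algebra K L]
    (n : ℕ) (hn : 2 ≤ n) (hd : Module.finrank K L = n)
    (ω : Fin n → L) (hω : ∃ b : Module.Basis (Fin n) K L, ∀ i, b i = ω i) :
    ∃ ψ : Projectivization K (Fin n → K) → L,
      (∀ (v : Fin n → K) (hv : v ≠ 0),
        ψ (Projectivization.mk K v hv) = (∑ j, v j • ω j) ^ (Fintype.card K - 1)) ∧
      Function.Injective ψ ∧
      Set.range ψ =
        {x : L | x ≠ 0 ∧ x ^ ((Fintype.card K ^ n - 1) / (Fintype.card K - 1)) = 1} :=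
  stmt2_general K L n ω hω
end

section
/- Let f(x) = x^r h(x^s) ∈ F_{q^n}[x] where q^n - 1 = ℓ s. Then f permutes F_{q^n} if and only if gcd(r, s) = 1 and g(x) = x^r h(x)^s permutes μ_ℓ. -/
open Polynomial

private lemma aux_bezout {G : Type*} [Group G] {r s : ℕ} (hrs : Nat.gcd r s = 1)
    {u v : G} (hr : u ^ r = v ^ r) (hs : u ^ s = v ^ s) : u = v := by
  have hb : (1 : ℤ) = r * Nat.gcdA r s + s * Nat.gcdB r s := by
    have h2 := Nat.gcd_eq_gcd_ab r s
    rw [hrs] at h2; exact_mod_cast h2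
  calc u = u ^ (1 : ℤ) := (zpow_one u).symm
    _ = (u ^ (r : ℤ)) ^ Nat.gcdA r s * (u ^ (s : ℤ)) ^ Nat.gcdB r s := by
        rw [← zpow_mul, ← zpow_mul, ← zpow_add, ← hb]
    _ = (v ^ (r : ℤ)) ^ Nat.gcdA r s * (v ^ (s : ℤ)) ^ Nat.gcdB r s := by
        simp only [zpow_natCast, hr, hs]
    _ = v := by rw [← zpow_mul, ← zpow_mul, ← zpow_add, ← hb, zpow_one]

private lemma aux_pow_surj {F : Type*} [Field F] [Fintype F] {ℓ s : ℕ}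
    (hℓ : 0 < ℓ) (hls : ℓ * s = Fintype.card F - 1) {y : Fˣ} (hy : y ^ ℓ = 1) :
    ∃ x : Fˣ, x ^ s = y := by
  obtain ⟨g, hg⟩ := IsCyclic.exists_generator (α := Fˣ)
  have hord : orderOf g = ℓ * s := by
    rw [orderOf_eq_card_of_forall_mem_zpowers hg, Nat.card_units,
      Nat.card_eq_fintype_card, hls]
  obtain ⟨k, hk⟩ := Subgroup.mem_zpowers_iff.mp (hg y)
  have h1 : g ^ (k * (ℓ : ℤ)) = 1 := by
    rw [zpow_mul, hk, zpow_natCast, hy]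
  have hdvd : ((ℓ * s : ℕ) : ℤ) ∣ k * ℓ := by
    rw [← hord]; exact orderOf_dvd_iff_zpow_eq_one.mpr h1
  obtain ⟨t, ht⟩ := hdvd
  have hk' : k = s * t := by
    have h3 : (ℓ : ℤ) * k = ℓ * (s * t) := by push_cast at ht ⊢; linarith
    exact mul_left_cancel₀ (by exact_mod_cast hℓ.ne') h3
  refine ⟨g ^ t, ?_⟩
  rw [← zpow_natCast (g ^ t) s, ← zpow_mul, mul_comm t (s : ℤ), ← hk', hk]

theorem stmt3 (F : Type*) [Field F] [Fintype F] (r ℓ s : ℕ)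
    (hr : 0 < r) (hℓ : 0 < ℓ) (hs : 0 < s) (hls : ℓ * s = Fintype.card F - 1)
    (h : Polynomial F) :
    Function.Bijective (fun x : F => x ^ r * h.eval (x ^ s)) ↔
      Nat.gcd r s = 1 ∧
        Set.BijOn (fun x : F => x ^ r * h.eval x ^ s)
          {x : F | x ^ ℓ = 1} {x : F | x ^ ℓ = 1} := by
  have hcard : 0 < Fintype.card F - 1 := by
    have := Fintype.one_lt_card (α := F); omega
  set f : F → F := fun x => x ^ r * h.eval (x ^ s) with hfdef
  set g : F → F := fun x => x ^ r * h.eval x ^ s with hgdef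
  have hone : ∀ x : F, x ≠ 0 → x ^ (ℓ * s) = 1 := fun x hx => by
    rw [hls]; exact FiniteField.pow_card_sub_one_eq_one x hx
  have key : ∀ x : F, g (x ^ s) = (f x) ^ s := by
    intro x
    simp only [hfdef, hgdef, ← pow_mul, mul_pow]
    rw [mul_comm s r]
  have hmem : ∀ x : F, x ≠ 0 → (x ^ s) ^ ℓ = 1 := fun x hx => by
    rw [← pow_mul, mul_comm]; exact hone x hx
  have hne0 : ∀ y : F, y ^ ℓ = 1 → y ≠ 0 := by
    intro y hy hc
    rw [hc, zero_pow hℓ.ne'] at hy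
    exact zero_ne_one hy
  have hf0 : f 0 = 0 := by simp [hfdef, zero_pow hr.ne']
  constructor
  · rintro hbij
    have hinj := hbij.injective
    have hh : ∀ x : F, x ≠ 0 → h.eval (x ^ s) ≠ 0 := by
      intro x hx hc
      apply hx
      apply hinj
      rw [hf0]; simp [hfdef, hc]
    have hfne : ∀ x : F, x ≠ 0 → f x ≠ 0 := by
      intro x hx
      exact mul_ne_zero (pow_ne_zero _ hx) (hh x hx)
    have hmaps : Set.MapsTo g {x : F | x ^ ℓ = 1} {x : F | x ^ ℓ = 1} := by
      intro y hy
      have hy' : y ^ ℓ = 1 := hy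
      have hy0 : y ≠ 0 := hne0 y hy'
      obtain ⟨u, hu⟩ := aux_pow_surj hℓ hls (y := Units.mk0 y hy0)
        (Units.ext (by push_cast; exact hy'))
      have hus : (u : F) ^ s = y := by
        have := congrArg (Units.val) hu; push_cast at this; exact this
      have : g y = (f u) ^ s := by rw [← hus, key]
      show g y ^ ℓ = 1
      rw [this, ← pow_mul, mul_comm s ℓ]
      exact hone _ (hfne _ u.ne_zero)
    have hsurj : Set.SurjOn g {x : F | x ^ ℓ = 1} {x : F | x ^ ℓ = 1} := by
      intro z hz
      have hz' : z ^ ℓ = 1 := hz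
      have hz0 : z ≠ 0 := hne0 z hz'
      obtain ⟨w, hw⟩ := aux_pow_surj hℓ hls (y := Units.mk0 z hz0)
        (Units.ext (by push_cast; exact hz'))
      have hws : (w : F) ^ s = z := by
        have := congrArg (Units.val) hw; push_cast at this; exact this
      obtain ⟨x, hx⟩ := hbij.surjective (w : F)
      have hx0 : x ≠ 0 := by
        intro hc; rw [hc] at hx
        exact w.ne_zero (by rw [← hx]; exact hf0)
      refine ⟨x ^ s, hmem x hx0, ?_⟩
      show g (x ^ s) = z
      rw [key, hx, hws]
    constructor
    · by_contra hd
      have hd0 : 0 < Nat.gcd r s := Nat.gcd_pos_of_pos_left s hr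
      have hd2 : 2 ≤ Nat.gcd r s := by omega
      have hdq : Nat.gcd r s ∣ ℓ * s := Dvd.dvd.mul_left (Nat.gcd_dvd_right r s) ℓ
      obtain ⟨g0, hg0⟩ := IsCyclic.exists_generator (α := Fˣ)
      have hord : orderOf g0 = ℓ * s := by
        rw [orderOf_eq_card_of_forall_mem_zpowers hg0, Nat.card_units,
          Nat.card_eq_fintype_card, hls]
      set d := Nat.gcd r s with hdd
      set ω : Fˣ := g0 ^ ((ℓ * s) / d) with hω
      have hωd : ω ^ d = 1 := by
        rw [hω, ← pow_mul, Nat.div_mul_cancel hdq, ← hord, pow_orderOf_eq_one]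
      have hωne : ω ≠ 1 := by
        intro hc
        have h4 : orderOf g0 ∣ (ℓ * s) / d := orderOf_dvd_of_pow_eq_one hc
        rw [hord] at h4
        have h5 : 0 < (ℓ * s) / d := Nat.div_pos (Nat.le_of_dvd (by positivity) hdq) (by omega)
        have h6 : ℓ * s ≤ (ℓ * s) / d := Nat.le_of_dvd h5 h4
        have h7 : (ℓ * s) / d < ℓ * s := Nat.div_lt_self (by positivity) hd2
        omega
      have hωr : (ω : F) ^ r = 1 := by
        obtain ⟨a, ha⟩ := Nat.gcd_dvd_left r s
        have : ω ^ r = 1 := by rw [ha, pow_mul, hωd, one_pow]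
        have := congrArg Units.val this; push_cast at this; exact this
      have hωs : (ω : F) ^ s = 1 := by
        obtain ⟨a, ha⟩ := Nat.gcd_dvd_right r s
        have : ω ^ s = 1 := by rw [ha, pow_mul, hωd, one_pow]
        have := congrArg Units.val this; push_cast at this; exact this
      have heq : f (ω : F) = f 1 := by
        simp only [hfdef, hωr, hωs, one_pow, one_mul]
      have := hinj heq
      exact hωne (Units.ext (by push_cast; exact this))
    · exact ((Set.toFinite _).surjOn_iff_bijOn_of_mapsTo hmaps).mp hsurj
  · rintro ⟨hgcd, hbij⟩
    have hh : ∀ y : F, y ^ ℓ = 1 → h.eval y ≠ 0 := by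
      intro y hy hc
      have hg : g y ∈ {x : F | x ^ ℓ = 1} := hbij.mapsTo hy
      have hg0 : g y ≠ 0 := hne0 _ hg
      apply hg0
      simp [hgdef, hc, zero_pow hs.ne']
    have hinj : Function.Injective f := by
      have hfne : ∀ x : F, x ≠ 0 → f x ≠ 0 := by
        intro x hx
        exact mul_ne_zero (pow_ne_zero _ hx) (hh _ (hmem x hx))
      intro x y hxy
      by_cases hx : x = 0
      · subst hx
        by_contra hy
        exact hfne y (Ne.symm hy) (by rw [← hxy, hf0])
      by_cases hy : y = 0
      · subst hy
        exact absurd (hxy.trans hf0) (hfne x hx)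
      have hss : x ^ s = y ^ s := by
        apply hbij.injOn (hmem x hx) (hmem y hy)
        show g (x ^ s) = g (y ^ s)
        rw [key, key, hxy]
      have hrr : x ^ r = y ^ r := by
        have hc : h.eval (x ^ s) ≠ 0 := hh _ (hmem x hx)
        have h6 : x ^ r * h.eval (x ^ s) = y ^ r * h.eval (y ^ s) := hxy
        rw [← hss] at h6
        exact mul_right_cancel₀ hc h6
      have := aux_bezout hgcd (u := Units.mk0 x hx) (v := Units.mk0 y hy)
        (Units.ext (by push_cast; exact hrr)) (Units.ext (by push_cast; exact hss))
      have := congrArg Units.val this; push_cast at this; exact this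
    exact Finite.injective_iff_bijective.mp hinj
end

section
/- Let q be a prime power, n = 2, u ∈ μ_{q+1} \ F_q, and define η : PG(1,q) → μ_{q+1} by η(x_0 : x_1) = (x_0 + x_1 u)^{q-1}. Then η is a bijection, and its inverse satisfies η^{-1}(1) = (1 : 0) and η^{-1}(x) = ((-u x + u^q)/(x - 1) : 1) for x ∈ μ_{q+1} \ {1}. -/
/-!
The Frobenius `y ↦ y ^ q` fixes exactly the image of `K`, and `u ^ q = u⁻¹` makes it an
involution on the elements `y = x₀ + x₁ u`. Hence `z = y ^ (q - 1) = y ^ q / y` satisfies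
`z ^ q = z⁻¹`, i.e. `z ∈ μ_{q+1}`. Since `1, u` are `K`-independent and a ratio with trivial
`(q - 1)`-st power is Frobenius-fixed, `y ^ (q - 1)` determines `y` up to `K^*`: this is
injectivity. For `x ≠ 1` in `μ_{q+1}`, `w = (u ^ q - u) / (x - 1)` satisfies `w ^ q = x w`, so
`c = w - u` is Frobenius-fixed, lies in `K`, and `(c + u) ^ (q - 1) = w ^ (q - 1) = x`.
-/

theorem pow_eq_inv_of_pow_succ_eq_one {G : Type*} [DivisionMonoid G] {x : G} {n : ℕ}
    (hx : x ^ (n + 1) = 1) : x ^ n = x⁻¹ :=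
  eq_inv_of_mul_eq_one_left (by rwa [← pow_succ])

theorem pow_pow_self_of_pow_succ_eq_one {G : Type*} [DivisionMonoid G] {x : G} {n : ℕ}
    (hx : x ^ (n + 1) = 1) : (x ^ n) ^ n = x := by
  rw [pow_eq_inv_of_pow_succ_eq_one hx, inv_pow, pow_eq_inv_of_pow_succ_eq_one hx, inv_inv]

theorem pow_sub_one_pow_succ_eq_one {M : Type*} [CommGroupWithZero M]
    {y : M} {n : ℕ} (hn : n ≠ 0) (hy0 : y ≠ 0) (hy : (y ^ n) ^ n = y) :
    (y ^ (n - 1)) ^ (n + 1) = 1 := by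
  have hz : y ^ (n - 1) * y = y ^ n := pow_sub_one_mul hn y
  refine mul_right_cancel₀ hy0 ?_
  rw [pow_succ, mul_assoc, hz, ← mul_pow, hz, hy, one_mul]

theorem linearCombination_one_injective {K L : Type*} [Field K] [Field L] [Algebra K L]
    {u : L} (hu : u ∉ Set.range (algebraMap K L)) :
    Function.Injective (Fintype.linearCombination K ![1, u]) :=
  linearIndependent_iff_injective_fintypeLinearCombination.mp <|
    (LinearIndependent.pair_iff' one_ne_zero).mpr fun a ha ↦
      hu ⟨a, by rw [Algebra.algebraMap_eq_smul_one, ha]⟩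

theorem linearCombination_one_apply {K L : Type*} [CommSemiring K] [Semiring L] [Algebra K L]
    (u : L) (v : Fin 2 → K) :
    Fintype.linearCombination K ![1, u] v = algebraMap K L (v 0) + algebraMap K L (v 1) * u := by
  simp [Fintype.linearCombination_apply, Fin.sum_univ_two, Algebra.smul_def]

namespace FiniteField

variable {K L : Type*} [Field K] [Fintype K] [Field L] [Algebra K L]

local notation "q" => Fintype.card K

open Polynomial in
theorem mem_range_algebraMap_of_pow_card_eq_self_s18 {x : L} (hx : x ^ q = x) :
    x ∈ Set.range (algebraMap K L) := by
  have hq : 1 < q := Fintype.one_lt_card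
  have hsplit : (X ^ q - X : K[X]).Splits := splits_iff_card_roots.mpr (by
    rw [roots_X_pow_card_sub_X, X_pow_card_sub_X_natDegree_eq K hq]; rfl)
  exact hsplit.mem_range_of_isRoot (X_pow_card_sub_X_ne_zero K hq) (by simp [hx])

theorem mem_range_algebraMap_of_pow_card_sub_one_eq_one {x : L} (hx : x ^ (q - 1) = 1) :
    x ∈ Set.range (algebraMap K L) := by
  refine mem_range_algebraMap_of_pow_card_eq_self_s18 ?_
  rw [← Nat.sub_add_cancel Fintype.card_pos, pow_succ, hx, one_mul]

variable (K) in
noncomputable def projLineToRootsOfUnity (u : L) : Projectivization K (Fin 2 → K) → L :=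
  Projectivization.lift (fun v ↦ Fintype.linearCombination K ![1, u] v.1 ^ (q - 1)) <| by
    rintro ⟨-, hv⟩ ⟨w, -⟩ t rfl
    have ht : t ≠ 0 := by rintro rfl; simp at hv
    simp [_root_.smul_pow, pow_card_sub_one_eq_one t ht]

theorem projLineToRootsOfUnity_mk (u : L) (v : Fin 2 → K) (hv : v ≠ 0) :
    projLineToRootsOfUnity K u (.mk K v hv) =
      (algebraMap K L (v 0) + algebraMap K L (v 1) * u) ^ (q - 1) := by
  rw [projLineToRootsOfUnity, Projectivization.lift_mk, linearCombination_one_apply]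

theorem projLineToRootsOfUnity_mk_one_zero (u : L) :
    projLineToRootsOfUnity K u (.mk K ![1, 0] (fun h ↦ one_ne_zero (congrFun h 0))) = 1 := by
  simp [projLineToRootsOfUnity_mk]

theorem sub_pow_card (x y : L) : (x - y) ^ q = x ^ q - y ^ q :=
  map_sub (frobeniusAlgHom K L) x y

theorem algebraMap_add_algebraMap_mul_pow_card (a b : K) (u : L) :
    (algebraMap K L a + algebraMap K L b * u) ^ q =
      algebraMap K L a + algebraMap K L b * u ^ q := by
  change frobeniusAlgHom K L _ = _
  rw [map_add, map_mul, AlgHom.commutes, AlgHom.commutes, frobeniusAlgHom_apply]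

section

variable {u : L}

theorem projLineToRootsOfUnity_ne_zero (hu : u ∉ Set.range (algebraMap K L))
    (p : Projectivization K (Fin 2 → K)) : projLineToRootsOfUnity K u p ≠ 0 := by
  induction p using Projectivization.ind with | h v hv => ?_
  exact pow_ne_zero _ ((map_ne_zero_iff _ (linearCombination_one_injective hu)).mpr hv)

theorem projLineToRootsOfUnity_injective (hu : u ∉ Set.range (algebraMap K L)) :
    Function.Injective (projLineToRootsOfUnity K u) := by
  set f := Fintype.linearCombination K ![1, u]
  have hf : Function.Injective f := linearCombination_one_injective hu
  intro x y
  induction x using Projectivization.ind with | h v hv => ?_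
  induction y using Projectivization.ind with | h w hw => ?_
  intro hvw
  simp only [projLineToRootsOfUnity, Projectivization.lift_mk] at hvw
  have hfw : f w ≠ 0 := (map_ne_zero_iff f hf).mpr hw
  obtain ⟨t, ht⟩ := mem_range_algebraMap_of_pow_card_sub_one_eq_one (x := f v / f w) (by
    rw [div_pow, hvw, div_self (pow_ne_zero _ hfw)])
  rw [Projectivization.mk_eq_mk_iff']
  exact ⟨t, hf (by rw [map_smul, Algebra.smul_def, ht, div_mul_cancel₀ _ hfw])⟩

theorem projLineToRootsOfUnity_pow_card_add_one (hu1 : u ^ (q + 1) = 1)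
    (hu : u ∉ Set.range (algebraMap K L)) (p : Projectivization K (Fin 2 → K)) :
    projLineToRootsOfUnity K u p ^ (q + 1) = 1 := by
  have hp := projLineToRootsOfUnity_ne_zero hu p
  induction p using Projectivization.ind with | h v hv => ?_
  rw [projLineToRootsOfUnity_mk] at hp ⊢
  refine pow_sub_one_pow_succ_eq_one Fintype.card_ne_zero
    (ne_zero_pow (Nat.sub_ne_zero_of_lt Fintype.one_lt_card) hp) ?_
  rw [algebraMap_add_algebraMap_mul_pow_card, algebraMap_add_algebraMap_mul_pow_card,
    pow_pow_self_of_pow_succ_eq_one hu1]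

theorem exists_projLineToRootsOfUnity_mk_eq (hu1 : u ^ (q + 1) = 1)
    (hu : u ∉ Set.range (algebraMap K L)) {x : L} (hx1 : x ^ (q + 1) = 1) (hx : x ≠ 1) :
    ∃ c : K, algebraMap K L c = (-u * x + u ^ q) / (x - 1) ∧
      projLineToRootsOfUnity K u (.mk K ![c, 1] (fun h ↦ one_ne_zero (congrFun h 1))) = x := by
  have hx0 : x ≠ 0 := by rintro rfl; simp at hx1
  have hx1' : x - 1 ≠ 0 := sub_ne_zero.mpr hx
  set w := (u ^ q - u) / (x - 1) with hw
  have hw_mul : (x - 1) * w = u ^ q - u := mul_div_cancel₀ _ hx1'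
  have hw0 : w ≠ 0 := div_ne_zero (sub_ne_zero.mpr fun h ↦
    hu (mem_range_algebraMap_of_pow_card_eq_self_s18 h)) hx1'
  have hwq : w ^ q = x * w := by
    rw [hw, div_pow, sub_pow_card, sub_pow_card, pow_pow_self_of_pow_succ_eq_one hu1,
      pow_eq_inv_of_pow_succ_eq_one hx1, one_pow]
    field_simp
    ring
  obtain ⟨c, hc⟩ : w - u ∈ Set.range (algebraMap K L) := by
    refine mem_range_algebraMap_of_pow_card_eq_self_s18 ?_
    rw [sub_pow_card, hwq]
    linear_combination hw_mul
  refine ⟨c, by rw [hc, hw]; field_simp; ring, ?_⟩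
  rw [projLineToRootsOfUnity_mk]
  simp only [Matrix.cons_val_zero, Matrix.cons_val_one, map_one, one_mul, hc,
    sub_add_cancel]
  refine mul_right_cancel₀ hw0 ?_
  rw [pow_sub_one_mul Fintype.card_ne_zero, hwq]

theorem range_projLineToRootsOfUnity (hu1 : u ^ (q + 1) = 1)
    (hu : u ∉ Set.range (algebraMap K L)) :
    Set.range (projLineToRootsOfUnity K u) = {x : L | x ≠ 0 ∧ x ^ (q + 1) = 1} := by
  ext x
  constructor
  · rintro ⟨p, rfl⟩
    exact ⟨projLineToRootsOfUnity_ne_zero hu p, projLineToRootsOfUnity_pow_card_add_one hu1 hu p⟩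
  · rintro ⟨-, hx1⟩
    by_cases hx : x = 1
    · exact hx ▸ ⟨_, projLineToRootsOfUnity_mk_one_zero u⟩
    · obtain ⟨c, -, hc⟩ := exists_projLineToRootsOfUnity_mk_eq hu1 hu hx1 hx
      exact ⟨_, hc⟩

end

end FiniteField

open FiniteField in
theorem stmt18 (K L : Type*) [Field K] [Fintype K] [Field L] [Algebra K L]
    (u : L) (hu1 : u ^ (Fintype.card K + 1) = 1) (hu2 : u ∉ Set.range (algebraMap K L)) :
    ∃ η : Projectivization K (Fin 2 → K) → L,
      (∀ (v : Fin 2 → K) (hv : v ≠ 0),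
        η (Projectivization.mk K v hv) =
          (algebraMap K L (v 0) + algebraMap K L (v 1) * u) ^ (Fintype.card K - 1)) ∧
      Function.Injective η ∧
      Set.range η = {x : L | x ≠ 0 ∧ x ^ (Fintype.card K + 1) = 1} ∧
      η (Projectivization.mk K ![1, 0] (by
        intro h; exact one_ne_zero (congrFun h 0))) = 1 ∧
      (∀ x : L, x ≠ 0 → x ^ (Fintype.card K + 1) = 1 → x ≠ 1 →
        ∃ c : K, algebraMap K L c = (-u * x + u ^ Fintype.card K) / (x - 1) ∧
          η (Projectivization.mk K ![c, 1] (by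
            intro h; exact one_ne_zero (congrFun h 1))) = x) :=
  ⟨projLineToRootsOfUnity K u, projLineToRootsOfUnity_mk u, projLineToRootsOfUnity_injective hu2,
    range_projLineToRootsOfUnity hu1 hu2, projLineToRootsOfUnity_mk_one_zero u,
    fun _ _ hx1 hx ↦ exists_projLineToRootsOfUnity_mk_eq hu1 hu2 hx1 hx⟩
end
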